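/- Let Σ₂ = {a,b}, k ∈ ℕ, and 0 ≤ m < k. The number of congruence classes of ∼_k consisting of binary words with exactly m arches, i.e., the cardinality of { [w]_{∼_k} : w ∈ Σ₂*, ι(w) = m }, equals ‖D^m · e‖₁, where D is the 3×3 integer matrix with rows (k−m, k−m, k−m), (1, 2, 1), (k−m, k−m, k−m), e is the column vector (k−m, 1, k−m)ᵀ, and ‖·‖₁ denotes the sum of the (nonnegative) entries. -/

import Mathlib

open List

variable {α : Type*} [DecidableEq α] [Fintype α]

/-- Simon `k`-congruence: `u` and `v` have the same scattered factors
(subsequences) of length at most `k`. -/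
def SimonCongr (k : ℕ) (u v : List α) : Prop :=
  ∀ s : List α, s.length ≤ k → (s.Sublist u ↔ s.Sublist v)

/-- `w` is `k`-universal with respect to the alphabet `S`: every word of length `k`
over `S` is a scattered factor of `w`. -/
def UniversalOn (S : Finset α) (k : ℕ) (w : List α) : Prop :=
  ∀ s : List α, s.length = k → (∀ x ∈ s, x ∈ S) → s.Sublist w

/-- The universality index of `w` w.r.t. the alphabet `S`. -/
noncomputable def iotaOn (S : Finset α) (w : List α) : ℕ :=
  sSup {k | UniversalOn S k w}

/-- The universality index of `w` w.r.t. the full alphabet. -/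
noncomputable def iotaUniv (w : List α) : ℕ := iotaOn Finset.univ w

/-- `a` is an arch w.r.t. `S`: it contains every letter of `S`, and its last letter
belongs to `S` and occurs exactly once in `a`. -/
def IsArchOn (S : Finset α) (a : List α) : Prop :=
  (∀ x ∈ S, x ∈ a) ∧ ∃ a' x, a = a' ++ [x] ∧ x ∈ S ∧ x ∉ a'

/-- `(ars, r)` is the arch factorization of `w` w.r.t. `S`. -/
def IsArchFactOn (S : Finset α) (w : List α) (ars : List (List α)) (r : List α) : Prop :=
  w = ars.flatten ++ r ∧ (∀ a ∈ ars, IsArchOn S a) ∧ ¬ (∀ x ∈ S, x ∈ r)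

/-- `(A, B)` is the α-β-factorization of `w` with `m` arches:
`αᵢ₋₁βᵢ` (for `i ∈ [m]`) together with rest `α_m` is the arch factorization of `w`, and
`(β_{m-i}α_{m-i})^R` together with rest `α₀^R` is the arch factorization of `w^R`. -/
def IsAlphaBetaFact (w : List α) (m : ℕ) (A B : ℕ → List α) : Prop :=
  IsArchFactOn Finset.univ w (List.ofFn fun i : Fin m => A i.val ++ B (i.val + 1)) (A m) ∧
  IsArchFactOn Finset.univ w.reverse
    (List.ofFn fun i : Fin m => (B (m - i.val) ++ A (m - i.val)).reverse) ((A 0).reverse)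

/-- The concatenation `αᵢ βᵢ₊₁ αᵢ₊₁ ⋯ βⱼ αⱼ`. -/
def abSeg (A B : ℕ → List α) (i j : ℕ) : List α :=
  A i ++ (((List.Ico (i + 1) (j + 1)).map fun l => B l ++ A l).flatten)

/-- The core of a `β`-factor: the factor with its first and last letter removed. -/
def coreOf (b : List α) : List α := (b.drop 1).dropLast

/-- The 3×3 matrix with rows `(k−m, k−m, k−m)`, `(1, 2, 1)`, `(k−m, k−m, k−m)`. -/
def matD (k m : ℕ) : Matrix (Fin 3) (Fin 3) ℤ :=
  !![(k : ℤ) - (m : ℤ), (k : ℤ) - (m : ℤ), (k : ℤ) - (m : ℤ);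
     1, 2, 1;
     (k : ℤ) - (m : ℤ), (k : ℤ) - (m : ℤ), (k : ℤ) - (m : ℤ)]

/-- The column vector `(k−m, 1, k−m)ᵀ`. -/
def vecE (k m : ℕ) : Fin 3 → ℤ := ![(k : ℤ) - (m : ℤ), 1, (k : ℤ) - (m : ℤ)]

/-!
Write a binary word as `xᴾ(¬x)u`: its first arch followed by the rest `u`. Prepending a word
that contains both letters raises the level of Simon's congruence by one, and a block `xᴾ` in
front of a word `q` can be shortened to length `k − ι(q)` without leaving its `∼ₖ`-class, but no
further when `q` does not start with `x`. Hence, when `ι(w) < k`, the `∼ₖ`-class of `xᴾ(¬x)u` is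
determined by `x`, the `∼ₖ₋₁`-class of `u` and `min(P, k − ι((¬x)u))`, so each class has exactly
one normal form. Sorting the normal forms with `M` arches by which letter, prepended, would create
a new arch gives counts `v_M` with `v_0 = e` and `v_(M+1) = D v_M`.
-/

namespace SimonCongr

variable {β : Type*} {k : ℕ} {u v w : List β}

theorem refl (k : ℕ) (u : List β) : SimonCongr k u u := fun _ _ => Iff.rfl

theorem symm (h : SimonCongr k u v) : SimonCongr k v u := fun s hs => (h s hs).symm

theorem trans (h₁ : SimonCongr k u v) (h₂ : SimonCongr k v w) : SimonCongr k u w :=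
  fun s hs => (h₁ s hs).trans (h₂ s hs)

theorem map_of_imp {k' : ℕ} {f : List β → List β}
    (h : ∀ u v, SimonCongr k u v → ∀ s : List β, s.length ≤ k' → s <+ f u → s <+ f v)
    (huv : SimonCongr k u v) : SimonCongr k' (f u) (f v) :=
  fun s hs => ⟨h u v huv s hs, h v u huv.symm s hs⟩

theorem append_left (z : List β) (h : SimonCongr k u v) : SimonCongr k (z ++ u) (z ++ v) := by
  refine map_of_imp (f := (z ++ ·)) (fun u v huv s hs hsub => ?_) h
  obtain ⟨s₁, s₂, rfl, h₁, h₂⟩ := sublist_append_iff.mp hsub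
  exact h₁.append ((huv s₂ (by simp at hs; omega)).mp h₂)

theorem append_left_of_forall_mem {A : List β} (hA : ∀ c, c ∈ A) (h : SimonCongr k u v) :
    SimonCongr (k + 1) (A ++ u) (A ++ v) := by
  refine map_of_imp (f := (A ++ ·)) (fun u v huv s hs hsub => ?_) h
  obtain ⟨s₁, s₂, rfl, h₁, h₂⟩ := sublist_append_iff.mp hsub
  by_cases hlen : s₂.length ≤ k
  · exact h₁.append ((huv s₂ hlen).mp h₂)
  · obtain rfl : s₁ = [] := length_eq_zero_iff.mp (by simp at hs; omega)
    obtain _ | ⟨c, s⟩ := s₂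
    · simp
    · have hs' := (huv s (by simp at hs; omega)).mp (sublist_of_cons_sublist h₂)
      simpa using (singleton_sublist.mpr (hA c)).append hs'

end SimonCongr

namespace BinaryWord

/-- Arch-counting automaton: in state `none` no letter of the current arch has been read,
in state `some d` only the letter `d`. -/
def archCount : Option Bool → List Bool → ℕ
  | _, [] => 0
  | none, c :: w => archCount (some c) w
  | some d, c :: w => if c = d then archCount (some d) w else archCount none w + 1

def archNum (w : List Bool) : ℕ := archCount none w

@[simp] theorem archNum_nil : archNum [] = 0 := rfl

theorem archCount_some_replicate_append (d : Bool) (p : ℕ) (w : List Bool) :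
    archCount (some d) (replicate p d ++ w) = archCount (some d) w := by
  induction p with
  | zero => rfl
  | succ p ih => simpa [replicate_succ, archCount] using ih

theorem archNum_replicate_append {x : Bool} {p : ℕ} (hp : 0 < p) (w : List Bool) :
    archNum (replicate p x ++ w) = archCount (some x) w := by
  obtain ⟨p, rfl⟩ : ∃ q, p = q + 1 := ⟨p - 1, by omega⟩
  exact archCount_some_replicate_append x p w

@[simp] theorem archNum_replicate (x : Bool) (p : ℕ) : archNum (replicate p x) = 0 := by
  rcases Nat.eq_zero_or_pos p with rfl | hp
  · rfl
  · simpa [archCount] using archNum_replicate_append hp []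

theorem archNum_arch {x : Bool} {p : ℕ} (hp : 0 < p) (w : List Bool) :
    archNum (replicate p x ++ (!x) :: w) = archNum w + 1 := by
  rw [archNum_replicate_append hp]
  simp [archCount, archNum]

@[elab_as_elim]
theorem block_induction {motive : List Bool → Prop} (nil : motive [])
    (block : ∀ x p, 0 < p → motive (replicate p x))
    (arch : ∀ x p w, 0 < p → motive w → motive (replicate p x ++ (!x) :: w))
    (w : List Bool) : motive w := by
  suffices h : ∀ x p, motive (replicate p x ++ w) from h true 0
  induction w with
  | nil =>
    intro x p
    rcases Nat.eq_zero_or_pos p with rfl | hp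
    · exact nil
    · simpa using block x p hp
  | cons c t ih =>
    intro x p
    by_cases hc : c = x
    · subst hc
      simpa [replicate_succ'] using ih c (p + 1)
    · obtain rfl : c = !x := by cases c <;> cases x <;> simp_all
      rcases Nat.eq_zero_or_pos p with rfl | hp
      · simpa using ih (!x) 1
      · exact arch x p t hp (by simpa using ih x 0)

theorem mem_replicate_append_singleton_not {x : Bool} {p : ℕ} (hp : 0 < p) (c : Bool) :
    c ∈ replicate p x ++ [!x] := by
  cases c <;> cases x <;> simp [hp.ne']

theorem cons_sublist_replicate_append_iff {x y : Bool} (h : y ≠ x) (p : ℕ) (s w : List Bool) :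
    y :: s <+ replicate p x ++ w ↔ y :: s <+ w := by
  induction p with
  | zero => rfl
  | succ p ih => simp [replicate_succ, sublist_cons_iff, h, ih]

theorem cons_sublist_replicate_append_cons_iff (x : Bool) (p : ℕ) (s w : List Bool) :
    (!x) :: s <+ replicate p x ++ (!x) :: w ↔ s <+ w := by
  rw [cons_sublist_replicate_append_iff (by simp), cons_sublist_cons]

theorem sublist_of_length_le_archNum {s w : List Bool} (h : s.length ≤ archNum w) : s <+ w := by
  induction w using block_induction generalizing s with
  | nil => simp_all
  | block x p hp => simp_all
  | arch x p w hp ih =>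
    rcases s with _ | ⟨c, s⟩
    · exact nil_sublist _
    · rw [archNum_arch hp] at h
      have := (singleton_sublist.mpr (mem_replicate_append_singleton_not (x := x) hp c)).append
        (ih (s := s) (by simpa using h))
      simpa using this

theorem head?_ne_some_not_headD (w : List Bool) (b : Bool) : w.head? ≠ some (!w.headD b) := by
  cases w <;> simp

theorem exists_cons_not_sublist (w : List Bool) :
    ∀ x, w.head? ≠ some x → ∃ ρ, ρ.length = archNum w ∧ ¬ x :: ρ <+ w := by
  induction w using block_induction with
  | nil => exact fun x _ => ⟨[], rfl, by simp⟩
  | block y p hp =>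
    intro x hx
    refine ⟨[], by simp, fun h => hx ?_⟩
    obtain rfl := eq_of_mem_replicate (h.subset mem_cons_self)
    simp [head?_replicate, hp.ne']
  | arch y p w hp ih =>
    intro x hx
    obtain rfl : x = !y := by
      cases x <;> cases y <;> simp_all [head?_replicate, hp.ne']
    obtain ⟨ρ, hρ, hnot⟩ := ih _ (head?_ne_some_not_headD w true)
    refine ⟨(!w.headD true) :: ρ, by simp [archNum_arch hp, hρ], fun h => hnot ?_⟩
    exact (cons_sublist_replicate_append_cons_iff y p _ w).mp h

theorem exists_not_sublist {w : List Bool} {j : ℕ} (h : archNum w < j) :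
    ∃ t : List Bool, t.length = j ∧ ¬ t <+ w := by
  obtain ⟨ρ, hρ, hnot⟩ := exists_cons_not_sublist w _ (head?_ne_some_not_headD w true)
  refine ⟨(!w.headD true) :: (ρ ++ replicate (j - archNum w - 1) true), by simp [hρ]; omega,
    fun hs => hnot ?_⟩
  exact (cons_sublist_cons.mpr (sublist_append_left ρ _)).trans hs

theorem universalOn_univ_iff {j : ℕ} {w : List Bool} :
    UniversalOn Finset.univ j w ↔ j ≤ archNum w := by
  refine ⟨fun h => ?_, fun h s hs _ => sublist_of_length_le_archNum (hs ▸ h)⟩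
  by_contra hlt
  obtain ⟨t, ht, hnot⟩ := exists_not_sublist (not_le.mp hlt)
  exact hnot (h t ht fun x _ => Finset.mem_univ x)

theorem iotaUniv_eq_archNum (w : List Bool) : iotaUniv w = archNum w := by
  have : {k | UniversalOn Finset.univ k w} = Set.Iic (archNum w) := by
    ext j
    exact universalOn_univ_iff
  rw [iotaUniv, iotaOn, this, csSup_Iic]

theorem archNum_le_of_sublist {u w : List Bool} (h : u <+ w) : archNum u ≤ archNum w := by
  by_contra hlt
  obtain ⟨t, ht, hnot⟩ := exists_not_sublist (not_le.mp hlt)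
  exact hnot ((sublist_of_length_le_archNum ht.le).trans h)

theorem archNum_le_archNum_cons (c : Bool) (w : List Bool) : archNum w ≤ archNum (c :: w) :=
  archNum_le_of_sublist (sublist_cons_self c w)

theorem archNum_cons_le (c : Bool) (w : List Bool) : archNum (c :: w) ≤ archNum w + 1 := by
  by_contra hlt
  obtain ⟨t, ht, hnot⟩ := exists_not_sublist (w := w) (j := archNum (c :: w) - 1) (by omega)
  have h := sublist_of_length_le_archNum (s := (!c) :: t) (w := c :: w) (by simp; omega)
  exact hnot (sublist_of_cons_sublist ((cons_sublist_replicate_append_iff (by simp) 1 t w).mp h))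

theorem archNum_eq_of_simonCongr {k : ℕ} {u v : List Bool} (h : SimonCongr k u v)
    (hu : archNum u < k) : archNum v = archNum u := by
  have key : ∀ {u v : List Bool}, SimonCongr k u v → archNum u < k → archNum v ≤ archNum u := by
    intro u v h hu
    by_contra hlt
    obtain ⟨t, ht, hnot⟩ := exists_not_sublist (lt_add_one (archNum u))
    exact hnot ((h t (by omega)).mpr (sublist_of_length_le_archNum (by omega)))
  exact le_antisymm (key h hu) (key h.symm ((key h hu).trans_lt hu))

theorem simonCongr_replicate_succ_append {x : Bool} {n k : ℕ} {q : List Bool}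
    (h : k ≤ n + archNum q) : SimonCongr k (replicate (n + 1) x ++ q) (replicate n x ++ q) := by
  intro s hs
  refine ⟨fun hsub => ?_, fun hsub => hsub.trans
    (((replicate_sublist_replicate x).mpr n.le_succ).append (Sublist.refl q))⟩
  obtain ⟨s₁, s₂, rfl, h₁, h₂⟩ := sublist_append_iff.mp hsub
  obtain ⟨j, hj, rfl⟩ := sublist_replicate_iff.mp h₁
  rcases Nat.lt_or_ge j (n + 1) with hjn | hjn
  · exact ((replicate_sublist_replicate x).mpr (by omega)).append h₂
  · obtain rfl : j = n + 1 := by omega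
    have : x :: s₂ <+ q := sublist_of_length_le_archNum (by simp at hs ⊢; omega)
    simpa [replicate_succ'] using (Sublist.refl (replicate n x)).append this

theorem simonCongr_replicate_append_min (x : Bool) (P k : ℕ) (q : List Bool) :
    SimonCongr k (replicate P x ++ q) (replicate (min P (k - archNum q)) x ++ q) := by
  induction P with
  | zero => simpa using SimonCongr.refl k q
  | succ P ih =>
    by_cases hP : P + 1 ≤ k - archNum q
    · rw [min_eq_left hP]
      exact SimonCongr.refl _ _
    · rw [show min (P + 1) (k - archNum q) = min P (k - archNum q) by omega]
      exact (simonCongr_replicate_succ_append (by omega)).trans ih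

/-- The witness `x^(P+1) ρ`, with `ρ` from `exists_cons_not_sublist`, embeds into `x^Q q` but not
into `x^P q`. -/
theorem min_le_min_of_simonCongr {x : Bool} {P Q k : ℕ} {q : List Bool} (hq : q.head? ≠ some x)
    (h : SimonCongr k (replicate P x ++ q) (replicate Q x ++ q)) :
    min Q (k - archNum q) ≤ min P (k - archNum q) := by
  by_contra hlt
  obtain ⟨ρ, hρ, hnot⟩ := exists_cons_not_sublist q x hq
  have hsub : replicate (P + 1) x ++ ρ <+ replicate Q x ++ q :=
    ((replicate_sublist_replicate x).mpr (by omega)).append (sublist_of_length_le_archNum hρ.le)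
  have := (h _ (by simp [hρ]; omega)).mpr hsub
  rw [replicate_succ', append_assoc, append_sublist_append_left] at this
  exact hnot this

theorem simonCongr_replicate_append_iff {x : Bool} {P Q k : ℕ} {q : List Bool}
    (hq : q.head? ≠ some x) :
    SimonCongr k (replicate P x ++ q) (replicate Q x ++ q) ↔
      min P (k - archNum q) = min Q (k - archNum q) := by
  refine ⟨fun h => le_antisymm (min_le_min_of_simonCongr hq h.symm)
    (min_le_min_of_simonCongr hq h), fun h => ?_⟩
  have hQ := simonCongr_replicate_append_min x Q k q
  rw [← h] at hQ
  exact (simonCongr_replicate_append_min x P k q).trans hQ.symm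


def archExt (n : ℕ) (u : List Bool) : Finset (List Bool) :=
  Finset.univ.biUnion fun x : Bool =>
    (Finset.Icc 1 (n - archNum ((!x) :: u))).image fun P => replicate P x ++ (!x) :: u

/-- Representatives of the `∼_(c + M)`-classes of words with `M` arches, one per class. -/
def normalForms (c : ℕ) : ℕ → Finset (List Bool)
  | 0 => insert [] (Finset.univ.biUnion fun x : Bool => (Finset.Icc 1 c).image (replicate · x))
  | M + 1 => (normalForms c M).biUnion (archExt (c + (M + 1)))

section

variable {c M : ℕ}

theorem mem_normalForms_zero {u : List Bool} :
    u ∈ normalForms c 0 ↔ u = [] ∨ ∃ x p, (0 < p ∧ p ≤ c) ∧ replicate p x = u := by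
  simp only [normalForms, Finset.mem_insert, Finset.mem_biUnion, Finset.mem_univ, true_and,
    Finset.mem_image, Finset.mem_Icc, Nat.one_le_iff_ne_zero, Nat.pos_iff_ne_zero]

theorem mem_normalForms_succ {w : List Bool} :
    w ∈ normalForms c (M + 1) ↔ ∃ u ∈ normalForms c M, ∃ x P,
      (0 < P ∧ P ≤ c + (M + 1) - archNum ((!x) :: u)) ∧ replicate P x ++ (!x) :: u = w := by
  simp only [normalForms, archExt, Finset.mem_biUnion, Finset.mem_univ, true_and,
    Finset.mem_image, Finset.mem_Icc, Nat.one_le_iff_ne_zero, Nat.pos_iff_ne_zero]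

theorem archNum_of_mem_normalForms : ∀ {M} {u : List Bool}, u ∈ normalForms c M → archNum u = M
  | 0, u, hu => by
    obtain rfl | ⟨x, p, -, rfl⟩ := mem_normalForms_zero.mp hu <;> simp
  | M + 1, _, hw => by
    obtain ⟨u, hu, x, P, ⟨hP, -⟩, rfl⟩ := mem_normalForms_succ.mp hw
    rw [archNum_arch hP, archNum_of_mem_normalForms hu]

theorem exists_mem_normalForms_simonCongr (hc : 0 < c) (w : List Bool) :
    ∃ u ∈ normalForms c (archNum w), SimonCongr (c + archNum w) w u := by
  induction w using block_induction with
  | nil => exact ⟨[], mem_normalForms_zero.mpr (Or.inl rfl), SimonCongr.refl _ _⟩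
  | block x p hp =>
    rw [archNum_replicate, add_zero]
    refine ⟨replicate (min p c) x, mem_normalForms_zero.mpr
      (Or.inr ⟨x, min p c, ⟨by omega, min_le_right _ _⟩, rfl⟩), ?_⟩
    simpa using simonCongr_replicate_append_min x p c []
  | arch x p w hp ih =>
    obtain ⟨u, hu, hwu⟩ := ih
    have hau := archNum_of_mem_normalForms hu
    rw [archNum_arch hp]
    set C := c + (archNum w + 1) - archNum ((!x) :: u)
    have hC : 0 < C := by have := archNum_cons_le (!x) u; omega
    refine ⟨replicate (min p C) x ++ (!x) :: u, mem_normalForms_succ.mpr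
      ⟨u, hu, x, min p C, ⟨by omega, min_le_right _ _⟩, rfl⟩, ?_⟩
    have hext :=
      SimonCongr.append_left_of_forall_mem (mem_replicate_append_singleton_not (x := x) hp) hwu
    simp only [append_assoc, singleton_append] at hext
    exact hext.trans (simonCongr_replicate_append_min x p _ _)

/-- Peeling the first letter off both sides makes the tail `u` congruent to a word containing
`xᴾ(¬x)u`, which has more arches than `u`. -/
theorem not_simonCongr_of_head_ne {x : Bool} {P Q k : ℕ} {u v : List Bool} (hP : 0 < P)
    (hQ : 0 < Q) (hk : archNum u + 1 < k) :
    ¬ SimonCongr k (replicate P x ++ (!x) :: u) (replicate Q (!x) ++ x :: v) := by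
  intro h
  obtain ⟨P, rfl⟩ : ∃ P', P = P' + 1 := ⟨P - 1, by omega⟩
  obtain ⟨Q, rfl⟩ : ∃ Q', Q = Q' + 1 := ⟨Q - 1, by omega⟩
  obtain ⟨k, rfl⟩ : ∃ k', k = k' + 1 := ⟨k - 1, by omega⟩
  have hu : SimonCongr k u (replicate Q (!x) ++ x :: v) := fun s hs => by
    have := h ((!x) :: s) (by simpa using hs)
    rwa [cons_sublist_replicate_append_cons_iff, replicate_succ, cons_append,
      cons_sublist_cons] at this
  have hv : SimonCongr k v (replicate P x ++ (!x) :: u) := fun s hs => by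
    have := h (x :: s) (by simpa using hs)
    rwa [cons_sublist_replicate_append_iff (x := !x) (y := x) (by simp), cons_sublist_cons,
      replicate_succ, cons_append, cons_sublist_cons, Iff.comm] at this
  have hchain : SimonCongr k u (replicate Q (!x) ++ (replicate (P + 1) x ++ (!x) :: u)) :=
    hu.trans (by simpa [replicate_succ] using hv.append_left (replicate Q (!x) ++ [x]))
  have h₁ := archNum_eq_of_simonCongr hchain (by omega)
  have h₂ := archNum_le_of_sublist
    (sublist_append_right (replicate Q (!x)) (replicate (P + 1) x ++ (!x) :: u))
  rw [archNum_arch P.succ_pos] at h₂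
  omega

theorem eq_of_mem_normalForms_of_simonCongr (hc : 0 < c) : ∀ {M} {u v : List Bool},
    u ∈ normalForms c M → v ∈ normalForms c M → SimonCongr (c + M) u v → u = v
  | 0, u, v, hu, hv, h => by
    have hlen : ∀ w ∈ normalForms c 0, w.length ≤ c + 0 := by
      intro w hw
      obtain rfl | ⟨x, p, ⟨-, hp⟩, rfl⟩ := mem_normalForms_zero.mp hw
      · simp
      · simpa
    exact ((h u (hlen u hu)).mp (Sublist.refl u)).antisymm
      ((h v (hlen v hv)).mpr (Sublist.refl v))
  | M + 1, _, _, hu', hv', h => by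
    obtain ⟨u, hu, x, P, ⟨hP, hPC⟩, rfl⟩ := mem_normalForms_succ.mp hu'
    obtain ⟨v, hv, y, Q, ⟨hQ, hQC⟩, rfl⟩ := mem_normalForms_succ.mp hv'
    obtain rfl : x = y := by
      by_contra hxy
      obtain rfl : y = !x := by cases x <;> cases y <;> simp_all
      exact not_simonCongr_of_head_ne (k := c + (M + 1)) hP hQ
        (by rw [archNum_of_mem_normalForms hu]; omega) (by simpa using h)
    obtain rfl : u = v := eq_of_mem_normalForms_of_simonCongr hc hu hv fun s hs => by
      simpa [cons_sublist_replicate_append_cons_iff] using h ((!x) :: s) (by simp; omega)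
    have := (simonCongr_replicate_append_iff (by simp)).mp h
    rw [min_eq_left hPC, min_eq_left hQC] at this
    rw [this]

theorem ncard_classes_eq_card_normalForms (hc : 0 < c) (m : ℕ) :
    {S : Set (List Bool) | ∃ w : List Bool,
        iotaUniv w = m ∧ S = {w' : List Bool | SimonCongr (c + m) w' w}}.ncard =
      (normalForms c m).card := by
  have himage : {S : Set (List Bool) | ∃ w : List Bool,
      iotaUniv w = m ∧ S = {w' : List Bool | SimonCongr (c + m) w' w}} =
      (fun u => {w' | SimonCongr (c + m) w' u}) '' (normalForms c m : Set (List Bool)) := by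
    ext S
    simp only [Set.mem_ofPred_eq, Set.mem_image, Finset.mem_coe, iotaUniv_eq_archNum]
    constructor
    · rintro ⟨w, rfl, rfl⟩
      obtain ⟨u, hu, hwu⟩ := exists_mem_normalForms_simonCongr hc w
      exact ⟨u, hu, Set.ext fun w' => ⟨fun h => h.trans hwu.symm, fun h => h.trans hwu⟩⟩
    · rintro ⟨u, hu, rfl⟩
      exact ⟨u, archNum_of_mem_normalForms hu, rfl⟩
  have hinj : Set.InjOn (fun u => {w' | SimonCongr (c + m) w' u})
      (normalForms c m : Set (List Bool)) := by
    intro u hu v hv huv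
    have huu : u ∈ (fun u => {w' | SimonCongr (c + m) w' u}) u := SimonCongr.refl _ u
    rw [huv] at huu
    exact eq_of_mem_normalForms_of_simonCongr hc hu hv huu
  rw [himage, hinj.ncard_image, Set.ncard_coe_finset]

end

theorem archNum_cons_cons_self (b : Bool) (w : List Bool) :
    archNum (b :: b :: w) = archNum (b :: w) := by
  simpa using (archNum_replicate_append (x := b) two_pos w).trans
    (archNum_replicate_append (x := b) one_pos w).symm

theorem not_archNum_cons_succ_both (u : List Bool) :
    ¬ (archNum (true :: u) = archNum u + 1 ∧ archNum (false :: u) = archNum u + 1) := by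
  rintro ⟨ht, hf⟩
  rcases u with _ | ⟨_ | _, u⟩
  · exact absurd ht (by decide)
  · rw [archNum_cons_cons_self] at hf; omega
  · rw [archNum_cons_cons_self] at ht; omega

/-- The coordinate of `vecE` and `matD` in which a word is counted. -/
def archState (u : List Bool) : Fin 3 :=
  if archNum (true :: u) = archNum u + 1 then 0
  else if archNum (false :: u) = archNum u + 1 then 2 else 1

theorem archState_replicate_append {x : Bool} {P : ℕ} (hP : 0 < P) (u : List Bool) :
    archState (replicate P x ++ (!x) :: u) =
      if P = 1 ∧ archNum ((!x) :: u) ≠ archNum u + 1 then 1 else if x then 2 else 0 := by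
  obtain ⟨P, rfl⟩ : ∃ P', P = P' + 1 := ⟨P - 1, by omega⟩
  have hw := archNum_arch (x := x) P.succ_pos u
  have hsame : archNum (x :: (replicate (P + 1) x ++ (!x) :: u)) = archNum u + 1 := by
    rw [← cons_append, ← replicate_succ, archNum_arch (by omega)]
  have hother : archNum ((!x) :: (replicate (P + 1) x ++ (!x) :: u)) =
      archNum (replicate P x ++ (!x) :: u) + 1 := by
    simpa [replicate_succ] using archNum_arch (x := !x) one_pos (replicate P x ++ (!x) :: u)
  rcases Nat.eq_zero_or_pos P with rfl | hP
  · cases x <;> simp_all [archState]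
  · rw [archNum_arch hP] at hother
    cases x <;> simp_all [archState] <;> omega

theorem card_filter_archState_Icc (c : ℕ) (x : Bool) (u : List Bool) (j : Fin 3) :
    ((Finset.Icc 1 (c + (archNum u + 1) - archNum ((!x) :: u))).filter
        fun P => archState (replicate P x ++ (!x) :: u) = j).card =
      (if (if x then 2 else 0) = j then c else 0) +
        (if archNum ((!x) :: u) ≠ archNum u + 1 ∧ j = 1 then 1 else 0) := by
  have hlo := archNum_le_archNum_cons (!x) u
  have hhi := archNum_cons_le (!x) u
  have hs1 : (if x then 2 else 0 : Fin 3) ≠ 1 := by cases x <;> decide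
  rw [Finset.filter_congr fun P hP => by
    rw [archState_replicate_append (Nat.succ_le_iff.mp (Finset.mem_Icc.mp hP).1)]]
  by_cases hg : archNum ((!x) :: u) = archNum u + 1
  · rw [show c + (archNum u + 1) - archNum ((!x) :: u) = c by omega]
    by_cases hs : (if x then 2 else 0 : Fin 3) = j <;> simp [hg, hs]
  · rw [show c + (archNum u + 1) - archNum ((!x) :: u) = c + 1 by omega,
      ← Finset.insert_Icc_add_one_left_eq_Icc (by omega), Finset.filter_insert,
      Finset.filter_congr fun P hP => by rw [if_neg (by simp at hP; omega)]]
    by_cases hs : (if x then 2 else 0 : Fin 3) = j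
    · subst hs
      simp [hg, hs1.symm, hs1]
    · by_cases hj : j = 1
      · subst hj
        simp [hg, hs1]
      · simp [hg, hs, hj, Ne.symm hj]

theorem replicate_append_not_cons_inj {x y : Bool} {P Q : ℕ} {u v : List Bool} (hP : 0 < P)
    (hQ : 0 < Q) (h : replicate P x ++ (!x) :: u = replicate Q y ++ (!y) :: v) :
    x = y ∧ P = Q ∧ u = v := by
  obtain rfl : x = y := by
    simpa [head?_replicate, hP.ne', hQ.ne'] using congrArg head? h
  refine ⟨rfl, ?_⟩
  clear hP hQ
  induction P generalizing Q with
  | zero => cases Q <;> simp_all [replicate_succ]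
  | succ P ih => cases Q <;> simp_all [replicate_succ]

theorem card_filter_archState_archExt (c : ℕ) (u : List Bool) (j : Fin 3) :
    (((archExt (c + (archNum u + 1)) u).filter (archState · = j)).card : ℤ) =
      matD c 0 j (archState u) := by
  have hdisj : (↑(Finset.univ : Finset Bool) : Set Bool).PairwiseDisjoint fun x =>
      (Finset.Icc 1 (c + (archNum u + 1) - archNum ((!x) :: u))).image
        fun P => replicate P x ++ (!x) :: u := by
    intro x _ y _ hxy
    refine Finset.disjoint_left.mpr ?_
    simp only [Finset.mem_image, Finset.mem_Icc]
    rintro _ ⟨P, ⟨hP, -⟩, rfl⟩ ⟨Q, ⟨hQ, -⟩, h⟩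
    exact hxy (replicate_append_not_cons_inj hQ hP h).1.symm
  have hinj : ∀ x : Bool, Function.Injective fun P => replicate P x ++ (!x) :: u :=
    fun x P Q h => by simpa using congrArg length h
  rw [archExt, Finset.filter_biUnion,
    Finset.card_biUnion (hdisj.mono fun _ => Finset.filter_subset _ _), Fintype.sum_bool]
  simp only [Finset.filter_image, Finset.card_image_of_injective _ (hinj _),
    card_filter_archState_Icc]
  have hboth := not_archNum_cons_succ_both u
  clear hdisj hinj
  unfold archState
  by_cases ht : archNum (true :: u) = archNum u + 1 <;>
    by_cases hf : archNum (false :: u) = archNum u + 1 <;>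
    fin_cases j <;> simp_all [matD]

def stateCount (S : Finset (List Bool)) (i : Fin 3) : ℤ := (S.filter (archState · = i)).card

theorem sum_stateCount (S : Finset (List Bool)) : ∑ i, stateCount S i = S.card := by
  rw [Finset.card_eq_sum_card_fiberwise (f := archState) (t := Finset.univ)
    fun _ _ => Finset.mem_univ _]
  push_cast
  rfl

theorem stateCount_normalForms_succ (c M : ℕ) :
    stateCount (normalForms c (M + 1)) = (matD c 0).mulVec (stateCount (normalForms c M)) := by
  funext j
  have hdisj : (↑(normalForms c M) : Set (List Bool)).PairwiseDisjoint
      (archExt (c + (M + 1))) := by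
    intro u _ v _ huv
    refine Finset.disjoint_left.mpr ?_
    simp only [archExt, Finset.mem_biUnion, Finset.mem_univ, true_and, Finset.mem_image]
    rintro _ ⟨x, P, hP, rfl⟩ ⟨y, Q, hQ, h⟩
    exact huv (replicate_append_not_cons_inj (Finset.mem_Icc.mp hQ).1
      (Finset.mem_Icc.mp hP).1 h).2.2.symm
  rw [stateCount, normalForms, Finset.filter_biUnion,
    Finset.card_biUnion (hdisj.mono fun _ => Finset.filter_subset _ _)]
  push_cast
  rw [Finset.sum_congr rfl fun u hu => by
      rw [← archNum_of_mem_normalForms hu, card_filter_archState_archExt],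
    ← Finset.sum_fiberwise (normalForms c M) archState]
  simp only [Matrix.mulVec, dotProduct, stateCount]
  refine Finset.sum_congr rfl fun i _ => ?_
  rw [Finset.sum_congr rfl fun u hu => by rw [(Finset.mem_filter.mp hu).2], Finset.sum_const,
    nsmul_eq_mul, mul_comm]

theorem archState_nil : archState [] = 1 := by decide

theorem archState_replicate {p : ℕ} (hp : 0 < p) (x : Bool) :
    archState (replicate p x) = if x then 2 else 0 := by
  obtain ⟨p, rfl⟩ : ∃ p', p = p' + 1 := ⟨p - 1, by omega⟩
  have hother : archNum ((!x) :: replicate (p + 1) x) = 1 := by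
    simpa [replicate_succ] using archNum_arch (x := !x) one_pos (replicate p x)
  have hsame : archNum (x :: replicate (p + 1) x) = 0 := by
    simpa [replicate_succ] using archNum_replicate x (p + 2)
  cases x <;> simp_all [archState]

theorem stateCount_normalForms_zero (c : ℕ) : stateCount (normalForms c 0) = vecE c 0 := by
  funext j
  set blocks := Finset.univ.biUnion fun x : Bool => (Finset.Icc 1 c).image (replicate · x)
  have hdisj : (↑(Finset.univ : Finset Bool) : Set Bool).PairwiseDisjoint
      fun x => (Finset.Icc 1 c).image (replicate · x) := by
    intro x _ y _ hxy
    refine Finset.disjoint_left.mpr ?_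
    simp only [Finset.mem_image, Finset.mem_Icc]
    rintro _ ⟨p, -, rfl⟩ ⟨q, ⟨hq, -⟩, h⟩
    exact hxy ((replicate_inj.mp h).2.resolve_left (by omega)).symm
  have hblocks : ((blocks.filter (archState · = j)).card : ℤ) =
      (if 0 = j then c else 0) + (if 2 = j then c else 0) := by
    rw [Finset.filter_biUnion,
      Finset.card_biUnion (hdisj.mono fun _ => Finset.filter_subset _ _), Fintype.sum_bool]
    simp only [Finset.filter_image, Finset.card_image_of_injective _ (replicate_left_injective _)]
    have hstate : ∀ x, (Finset.Icc 1 c).filter (fun p => archState (replicate p x) = j) =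
        (Finset.Icc 1 c).filter fun _ => (if x then 2 else 0) = j := fun x =>
      Finset.filter_congr fun p hp => by rw [archState_replicate (Finset.mem_Icc.mp hp).1]
    simp only [hstate]
    fin_cases j <;> simp
  have hnil : [] ∉ blocks.filter (archState · = j) := by
    simp [blocks, Finset.mem_filter]
  rw [stateCount, normalForms, Finset.filter_insert, archState_nil]
  split_ifs with h1
  · rw [Finset.card_insert_of_notMem hnil]
    push_cast
    rw [hblocks]
    subst h1
    simp [vecE]
  · rw [hblocks]
    fin_cases j <;> simp_all [vecE]

theorem stateCount_normalForms (c M : ℕ) :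
    stateCount (normalForms c M) = (matD c 0 ^ M).mulVec (vecE c 0) := by
  induction M with
  | zero => simp [stateCount_normalForms_zero]
  | succ M ih => rw [stateCount_normalForms_succ, ih, pow_succ', Matrix.mulVec_mulVec]

theorem matD_add_right (c m : ℕ) : matD (c + m) m = matD c 0 := by
  simp [matD]

theorem vecE_add_right (c m : ℕ) : vecE (c + m) m = vecE c 0 := by
  simp [vecE]

end BinaryWord

/-- the number of classes of `∼ₖ` of binary words with exactly `m`
arches equals `‖D^m · e‖₁`. -/
theorem binary_class_count_arches (k m : ℕ) (hm : m < k) :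
    ({S : Set (List Bool) | ∃ w : List Bool,
        iotaUniv w = m ∧ S = {w' : List Bool | SimonCongr k w' w}}.ncard : ℤ)
      = ∑ i, ((matD k m) ^ m).mulVec (vecE k m) i := by
  obtain ⟨c, rfl⟩ : ∃ c, k = c + m := ⟨k - m, by omega⟩
  rw [BinaryWord.ncard_classes_eq_card_normalForms (by omega) m, BinaryWord.matD_add_right,
    BinaryWord.vecE_add_right, ← BinaryWord.stateCount_normalForms, BinaryWord.sum_stateCount]
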